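/- arXiv:1807.02462 — 5 statements merged into one kernel-verified Lean document; each statement's English description precedes it below -/
import Mathlib

section
/- Let 0 < θ_i < 1 and R > 0 satisfy θ_i R = 1 - e^{-R}, and let λ_1 > 0. Then e^{-R(1+2√λ_1)} - 1 + θ_i R(1 + 2√λ_1) > 0. In particular the dispersion relation D_{0,1}(√λ_1, Le) = e^{-R(1+2√λ_1)} - 1 + θ_i R (1+2√λ_1) does not vanish. -/
theorem stmt7 (θ R lam1 : ℝ) (hθ : 0 < θ) (hθ1 : θ < 1) (hR : 0 < R)
    (hrel : θ * R = 1 - Real.exp (-R)) (hlam1 : 0 < lam1) :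
    0 < Real.exp (-(R * (1 + 2 * Real.sqrt lam1))) - 1 + θ * R * (1 + 2 * Real.sqrt lam1) := by
  set t := 2 * Real.sqrt lam1 with ht_def
  have ht : 0 < t := by positivity
  set a := Real.exp (-R) with ha_def
  have ha : 0 < a := Real.exp_pos _
  have ha1 : a < 1 := Real.exp_lt_one_iff.mpr (by linarith)
  have key : 1 + (1 + t) * (a - 1) < (1 + (a - 1)) ^ (1 + t) :=
    one_add_mul_self_lt_rpow_one_add (by linarith) (by intro h; nlinarith) (by linarith)
  have hexp : Real.exp (-(R * (1 + t))) = a ^ (1 + t) := by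
    rw [show -(R * (1 + t)) = (-R) * (1 + t) by ring, Real.exp_mul]
  have h1 : (1 : ℝ) + (a - 1) = a := by ring
  rw [h1] at key
  have hmul : θ * R * (1 + t) = (1 - a) * (1 + t) := by rw [hrel]
  rw [hexp, hmul]
  nlinarith [key]
end

section
/- Fix constants θ_i ∈ (0,1), R > 0 with θ_i R = 1 - e^{-R}, Le ∈ (0,1], and λ_1 > 0. Define X_1(λ) = √(1 + 4λ + 4λ_1) and Y_1(λ) = √(Le² + 4λ·Le + 4λ_1) for λ ≥ 0, and D(λ) = exp(R(Le - 1 - X_1(λ) - Y_1(λ))/2) - 1 + θ_i R X_1(λ). Then for all λ ∈ [0, √λ_1], ∂D/∂λ(λ) > 2(1 - (R+1)e^{-R})/X_1(λ) > 0. -/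
private lemma stmt9_aux (E e R Le a b : ℝ) (ha0 : 0 < a) (hb0 : 0 < b) :
    E * (R * (0 - 4 / (2 * a) - 4 * Le / (2 * b)) / 2) + (1 - e) * (4 / (2 * a))
      = -(E * R / a) - E * R * Le / b + 2 * (1 - e) / a := by
  field_simp
  ring

theorem stmt9 (θ R Le lam1 : ℝ) (hθ : 0 < θ) (hθ1 : θ < 1) (hR : 0 < R)
    (hrel : θ * R = 1 - Real.exp (-R)) (hLe : 0 < Le) (hLe1 : Le ≤ 1) (hlam1 : 0 < lam1)
    (X1 Y1 D : ℝ → ℝ)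
    (hX : ∀ l, X1 l = Real.sqrt (1 + 4 * l + 4 * lam1))
    (hY : ∀ l, Y1 l = Real.sqrt (Le ^ 2 + 4 * l * Le + 4 * lam1))
    (hD : ∀ l, D l = Real.exp (R * (Le - 1 - X1 l - Y1 l) / 2) - 1 + θ * R * X1 l) :
    ∀ l ∈ Set.Icc 0 (Real.sqrt lam1),
      2 * (1 - (R + 1) * Real.exp (-R)) / X1 l < deriv D l ∧
      0 < 2 * (1 - (R + 1) * Real.exp (-R)) / X1 l := by
  intro l hl
  obtain ⟨hl0, _⟩ := hl
  set a := Real.sqrt (1 + 4 * l + 4 * lam1) with ha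
  set b := Real.sqrt (Le ^ 2 + 4 * l * Le + 4 * lam1) with hb
  have hua : (0:ℝ) < 1 + 4 * l + 4 * lam1 := by nlinarith
  have hvb : (0:ℝ) < Le ^ 2 + 4 * l * Le + 4 * lam1 := by nlinarith
  have ha0 : 0 < a := Real.sqrt_pos.mpr hua
  have hb0 : 0 < b := Real.sqrt_pos.mpr hvb
  have ha2 : a ^ 2 = 1 + 4 * l + 4 * lam1 := Real.sq_sqrt hua.le
  have hb2 : b ^ 2 = Le ^ 2 + 4 * l * Le + 4 * lam1 := Real.sq_sqrt hvb.le
  -- derivative computation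
  have hu : HasDerivAt (fun x : ℝ => 1 + 4 * x + 4 * lam1) 4 l := by
    have h := ((hasDerivAt_id l).const_mul 4).const_add 1 |>.add_const (4 * lam1)
    simpa using h
  have hv : HasDerivAt (fun x : ℝ => Le ^ 2 + 4 * x * Le + 4 * lam1) (4 * Le) l := by
    have h := (((hasDerivAt_id l).const_mul 4).mul_const Le).const_add (Le ^ 2)
      |>.add_const (4 * lam1)
    simpa using h
  have hsx : HasDerivAt (fun x : ℝ => Real.sqrt (1 + 4 * x + 4 * lam1)) (4 / (2 * a)) l :=
    hu.sqrt hua.ne'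
  have hsy : HasDerivAt (fun x : ℝ => Real.sqrt (Le ^ 2 + 4 * x * Le + 4 * lam1))
      (4 * Le / (2 * b)) l := hv.sqrt hvb.ne'
  have hE : HasDerivAt (fun x : ℝ => R * (Le - 1 - Real.sqrt (1 + 4 * x + 4 * lam1)
      - Real.sqrt (Le ^ 2 + 4 * x * Le + 4 * lam1)) / 2)
      (R * (0 - 4 / (2 * a) - 4 * Le / (2 * b)) / 2) l := by
    exact (((hasDerivAt_const l (Le - 1)).sub hsx).sub hsy).const_mul R |>.div_const 2
  have hfull : HasDerivAt (fun x : ℝ =>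
      Real.exp (R * (Le - 1 - Real.sqrt (1 + 4 * x + 4 * lam1)
        - Real.sqrt (Le ^ 2 + 4 * x * Le + 4 * lam1)) / 2) - 1
      + θ * R * Real.sqrt (1 + 4 * x + 4 * lam1))
      (Real.exp (R * (Le - 1 - a - b) / 2) * (R * (0 - 4 / (2 * a) - 4 * Le / (2 * b)) / 2)
        + θ * R * (4 / (2 * a))) l := by
    exact (hE.exp.sub_const 1).add (hsx.const_mul (θ * R))
  have hDeq : D = fun x : ℝ =>
      Real.exp (R * (Le - 1 - Real.sqrt (1 + 4 * x + 4 * lam1)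
        - Real.sqrt (Le ^ 2 + 4 * x * Le + 4 * lam1)) / 2) - 1
      + θ * R * Real.sqrt (1 + 4 * x + 4 * lam1) := by
    funext x; rw [hD x, hX x, hY x]
  have hderiv : deriv D l = Real.exp (R * (Le - 1 - a - b) / 2)
      * (R * (0 - 4 / (2 * a) - 4 * Le / (2 * b)) / 2) + θ * R * (4 / (2 * a)) := by
    rw [hDeq]; exact hfull.deriv
  set E := Real.exp (R * (Le - 1 - a - b) / 2) with hE'
  set e := Real.exp (-R) with he'
  have hE0 : 0 < E := Real.exp_pos _
  have he0 : 0 < e := Real.exp_pos _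
  have hEe : E < e := by
    apply Real.exp_lt_exp.mpr
    have ha1 : 1 < a := by nlinarith
    have hbLe : Le < b := by nlinarith
    nlinarith
  -- a > 1, b > Le
  have hXl : X1 l = a := by rw [hX l]
  clear_value a b E e
  have hElt : E < e := hEe
  clear hfull hDeq hE hu hv hsx hsy hD hX hY hEe
  have hLab : Le * a ≤ b := by
    have h1 : (Le * a) ^ 2 ≤ b ^ 2 := by
      nlinarith [mul_nonneg (mul_nonneg hl0 hLe.le) (sub_nonneg.mpr hLe1),
        mul_nonneg hlam1.le (sub_nonneg.mpr hLe1), mul_pos hLe hlam1]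
    nlinarith [mul_pos hLe ha0, h1]
  -- positivity part
  have hpos : 0 < 1 - (R + 1) * e := by
    have h1 : R + 1 < Real.exp R := by
      have := Real.add_one_lt_exp hR.ne'
      linarith
    have h2 : (R + 1) * e < Real.exp R * e := by
      exact mul_lt_mul_of_pos_right h1 he0
    have h3 : Real.exp R * e = 1 := by
      rw [he', ← Real.exp_add]; simp
    linarith
  constructor
  · rw [hderiv, hXl, hrel]
    -- key inequality
    have h1 : E * R * Le / b ≤ E * R / a := by
      rw [div_le_div_iff₀ hb0 ha0]
      calc E * R * Le * a = (E * R) * (Le * a) := by ring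
        _ ≤ (E * R) * b := mul_le_mul_of_nonneg_left hLab (mul_nonneg hE0.le hR.le)
        _ = E * R * b := by ring
    have h2 : E * R / a < e * R / a := by
      apply div_lt_div_of_pos_right (mul_lt_mul_of_pos_right hElt hR) ha0
    have hgoal : 2 * (1 - (R + 1) * e) / a
        = 2 * (1 - e) / a - 2 * (e * R / a) := by ring
    rw [stmt9_aux E e R Le a b ha0 hb0, hgoal]
    linarith
  · rw [hXl]
    exact div_pos (by linarith) ha0
end

section
/- Let Le ∈ (0,1), λ ∈ ℂ with Re λ ≥ 1, and λ_k ≥ 0. Set Y_k = √(Le² + 4λ·Le + 4λ_k) (principal square root). Then |Y_k − Le| ≥ (Le/2)·√(1 + |λ| + λ_k). -/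
/-!
Since `Y² = Le² + 4u` with `u = Le·λ + λ_k`, we have `(Y - Le)(Y + Le) = 4u`, so
`|Y - Le| = 4|u| / |Y + Le|`. Because `Re λ ≥ 0` the two terms of `u` do not cancel:
`|u|² ≥ (Le|λ|)² + λ_k²`, while `|Y + Le|² ≤ 2(|Y|² + Le²) ≤ 4Le² + 8|u|`.
What remains is a polynomial inequality in `Le`, `|λ|` and `λ_k`.
-/

open Complex

lemma norm_add_sq_le {E : Type*} [SeminormedAddGroup E] (a b : E) :
    ‖a + b‖ ^ 2 ≤ 2 * (‖a‖ ^ 2 + ‖b‖ ^ 2) :=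
  (pow_le_pow_left₀ (norm_nonneg _) (norm_add_le a b) 2).trans add_sq_le

lemma Complex.sq_cpow_one_half (z : ℂ) : (z ^ ((1 : ℂ) / 2)) ^ 2 = z := by
  simp [one_div]

lemma Complex.norm_sub_mul_norm_add_of_sq_eq {Y c w : ℂ} (h : Y ^ 2 = c ^ 2 + w) :
    ‖Y - c‖ * ‖Y + c‖ = ‖w‖ := by
  rw [← norm_mul]
  congr 1
  linear_combination h

lemma Complex.sq_norm_add_ofReal_le_of_sq_eq {Y w : ℂ} {c : ℝ} (h : Y ^ 2 = c ^ 2 + w) :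
    ‖Y + c‖ ^ 2 ≤ 4 * c ^ 2 + 2 * ‖w‖ := by
  have hY : ‖Y‖ ^ 2 ≤ c ^ 2 + ‖w‖ := by
    have := norm_add_le ((c : ℂ) ^ 2) w
    rwa [← h, norm_pow, norm_pow, norm_real, Real.norm_eq_abs, sq_abs] at this
  have := norm_add_sq_le Y (c : ℂ)
  rw [norm_real, Real.norm_eq_abs, sq_abs] at this
  linarith

lemma Complex.sq_norm_add_sq_le_sq_norm_add_ofReal {z : ℂ} (hz : 0 ≤ z.re) {t : ℝ} (ht : 0 ≤ t) :
    ‖z‖ ^ 2 + t ^ 2 ≤ ‖z + t‖ ^ 2 := by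
  simp only [Complex.sq_norm, normSq_apply, add_re, add_im, ofReal_re, ofReal_im, add_zero]
  nlinarith [mul_nonneg hz ht]

lemma le_sq_add_sq_of_le_one {a r q : ℝ} (ha : 0 ≤ a) (ha1 : a ≤ 1) (hr : 1 ≤ r) (hq : 0 ≤ q) :
    a ^ 2 * (1 + r + q) * (a ^ 2 + 2 * (a * r + q)) ≤ 16 * ((a * r) ^ 2 + q ^ 2) := by
  set p := a * r
  have hap : a ^ 2 ≤ p := by nlinarith
  have h₁ : a ^ 2 * (1 + r + q) ≤ 2 * (p + q) := by nlinarith [mul_nonneg ha hq]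
  have h₂ : a ^ 2 + 2 * (p + q) ≤ 3 * (p + q) := by linarith
  calc a ^ 2 * (1 + r + q) * (a ^ 2 + 2 * (p + q))
      ≤ 2 * (p + q) * (3 * (p + q)) := by gcongr
    _ ≤ 16 * (p ^ 2 + q ^ 2) := by nlinarith [sq_nonneg (p - q)]

theorem stmt11 (Le lamk : ℝ) (hLe : 0 < Le) (hLe1 : Le < 1) (hlamk : 0 ≤ lamk)
    (lam : ℂ) (hlam : 1 ≤ lam.re)
    (Y : ℂ)
    (hY : Y = ((Le : ℂ) ^ 2 + 4 * lam * (Le : ℂ) + 4 * (lamk : ℂ)) ^ ((1 : ℂ) / 2)) :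
    (Le / 2) * Real.sqrt (1 + ‖lam‖ + lamk) ≤ ‖Y - (Le : ℂ)‖ := by
  set u : ℂ := Le * lam + lamk
  have hY2 : Y ^ 2 = (Le : ℂ) ^ 2 + 4 * u := by rw [hY, sq_cpow_one_half]; ring
  have hr : 1 ≤ ‖lam‖ := hlam.trans (re_le_norm lam)
  have hu_lower : (Le * ‖lam‖) ^ 2 + lamk ^ 2 ≤ ‖u‖ ^ 2 := by
    have hre : 0 ≤ (Le * lam).re := by simp only [re_ofReal_mul]; positivity
    simpa [norm_mul, abs_of_pos hLe] using sq_norm_add_sq_le_sq_norm_add_ofReal hre hlamk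
  have hu_upper : ‖u‖ ≤ Le * ‖lam‖ + lamk := by
    simpa [norm_mul, abs_of_pos hLe, abs_of_nonneg hlamk] using norm_add_le (Le * lam) (lamk : ℂ)
  have hB : ‖Y + Le‖ ^ 2 ≤ 4 * Le ^ 2 + 2 * ‖4 * u‖ := sq_norm_add_ofReal_le_of_sq_eq hY2
  have hAB : ‖Y - Le‖ * ‖Y + Le‖ = ‖4 * u‖ := norm_sub_mul_norm_add_of_sq_eq hY2
  rw [norm_mul, RCLike.norm_ofNat] at hB hAB
  have hB_pos : 0 < ‖Y + Le‖ := by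
    refine (norm_nonneg _).lt_of_ne fun h ↦ ?_
    rw [← h, mul_zero] at hAB
    nlinarith [sq_nonneg lamk, mul_pos hLe (one_pos.trans_le hr)]
  refine le_of_mul_le_mul_right ?_ hB_pos
  rw [hAB]
  refine abs_le_of_sq_le_sq' ?_ (by positivity) |>.2
  have hsqrt := Real.sq_sqrt (by positivity : (0 : ℝ) ≤ 1 + ‖lam‖ + lamk)
  calc (Le / 2 * √(1 + ‖lam‖ + lamk) * ‖Y + Le‖) ^ 2
      = Le ^ 2 * (1 + ‖lam‖ + lamk) * (‖Y + Le‖ ^ 2 / 4) := by rw [mul_pow, mul_pow, hsqrt]; ring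
    _ ≤ Le ^ 2 * (1 + ‖lam‖ + lamk) * (Le ^ 2 + 2 * (Le * ‖lam‖ + lamk)) := by
        gcongr
        linarith
    _ ≤ 16 * ((Le * ‖lam‖) ^ 2 + lamk ^ 2) := le_sq_add_sq_of_le_one hLe.le hLe1.le hr hlamk
    _ ≤ (4 * ‖u‖) ^ 2 := by linarith
end

section
/- For each ρ > 0 and each λ ∈ ℂ with ρ·Re λ + (Im λ)² > 0, setting Z_k = √(ρ² + 4λρ + 4λ_k) with λ_k = k²π²/(4ℓ²) (ℓ > 0 fixed), one has Re Z_k > ρ and there is a constant c_λ > 0 (independent of k) with Re Z_k ≥ c_λ(|k| + 1) for all integers k. -/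
private lemma aux1 (ρ A B : ℝ) (hρ : 0 < ρ) (h : 4*ρ^4 < B^2 + 4*ρ^2*A) :
    ρ < Real.sqrt ((Real.sqrt (A^2+B^2) + A)/2) := by
  have h1 : 2*ρ^2 - A < Real.sqrt (A^2+B^2) := by
    rcases le_or_gt (2*ρ^2 - A) 0 with h0 | h0
    · have hpos : 0 < A^2 + B^2 := by
        rcases eq_or_lt_of_le (by positivity : (0:ℝ) ≤ A^2+B^2) with he | he
        · exfalso
          have hA : A^2 = 0 := by nlinarith [sq_nonneg A, sq_nonneg B]
          have hB : B^2 = 0 := by nlinarith [sq_nonneg A, sq_nonneg B]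
          have : A = 0 := by nlinarith
          have : B = 0 := by nlinarith
          nlinarith [pow_pos hρ 4]
        · exact he
      exact lt_of_le_of_lt h0 (Real.sqrt_pos.mpr hpos)
    · exact Real.lt_sqrt_of_sq_lt (by nlinarith)
  refine Real.lt_sqrt_of_sq_lt ?_
  nlinarith

private lemma aux2 (A B : ℝ) :
    Real.sqrt A ≤ Real.sqrt ((Real.sqrt (A^2+B^2) + A)/2) := by
  apply Real.sqrt_le_sqrt
  have : A ≤ Real.sqrt (A^2+B^2) := by
    refine Real.le_sqrt_of_sq_le ?_
    nlinarith [sq_nonneg B]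
  linarith

theorem stmt13 (ρ ℓ : ℝ) (hρ : 0 < ρ) (hℓ : 0 < ℓ) (lam : ℂ)
    (h : 0 < ρ * lam.re + lam.im ^ 2)
    (Z : ℤ → ℂ)
    (hZ : ∀ k : ℤ, Z k = ((ρ : ℂ) ^ 2 + 4 * lam * (ρ : ℂ)
        + 4 * (((k : ℝ) ^ 2 * Real.pi ^ 2 / (4 * ℓ ^ 2) : ℝ) : ℂ)) ^ ((1 : ℂ) / 2)) :
    (∀ k : ℤ, ρ < (Z k).re) ∧
    ∃ c > (0:ℝ), ∀ k : ℤ, c * (|(k : ℝ)| + 1) ≤ (Z k).re := by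
  have hπ := Real.pi_pos
  set μ : ℤ → ℝ := fun k => (k:ℝ)^2 * Real.pi^2 / (4*ℓ^2) with hμdef
  have hμ : ∀ k, 0 ≤ μ k := fun k => by positivity
  set A : ℤ → ℝ := fun k => ρ^2 + 4*ρ*lam.re + 4*μ k with hAdef
  set B : ℝ := 4*ρ*lam.im with hBdef
  have hre : ∀ k : ℤ, (Z k).re
      = Real.sqrt ((Real.sqrt ((A k)^2 + B^2) + A k)/2) := by
    intro k
    rw [hZ k, show (1:ℂ)/2 = (2⁻¹ : ℂ) by norm_num, Complex.cpow_inv_two_re]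
    rw [show ((ρ:ℂ))^2 = ((ρ^2:ℝ):ℂ) from by push_cast; ring]
    set w : ℂ := ((ρ^2 : ℝ) : ℂ) + 4 * lam * (ρ : ℂ) + 4 * ((μ k : ℝ) : ℂ) with hw
    have hwre : w.re = A k := by
      simp [hw, hAdef, Complex.add_re, Complex.mul_re, pow_two]
      ring
    have hwim : w.im = B := by
      simp [hw, hBdef, Complex.add_im, Complex.mul_im, pow_two]
      ring
    rw [Complex.norm_def, Complex.normSq_apply, hwre, hwim]
    ring_nf
  have part1 : ∀ k : ℤ, ρ < (Z k).re := by
    intro k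
    rw [hre k]
    apply aux1 _ _ _ hρ
    have h2 : 0 < ρ^2 * (ρ * lam.re + lam.im^2) := by positivity
    have h3 : 0 ≤ ρ^2 * μ k := by positivity
    simp only [hBdef, hAdef]
    nlinarith
  refine ⟨part1, ?_⟩
  set M : ℝ := 2*ρ*|lam.re| with hMdef
  have hM0 : 0 ≤ M := by positivity
  set K₀ : ℝ := 2*ℓ*Real.sqrt M/Real.pi with hK₀def
  have hK₀0 : 0 ≤ K₀ := by positivity
  refine ⟨min (Real.pi/(4*ℓ)) (ρ/(K₀+2)), lt_min (by positivity) (by positivity), ?_⟩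
  intro k
  rcases le_or_gt (K₀+1) |(k:ℝ)| with hk | hk
  · -- large k
    have h1 : 1 ≤ |(k:ℝ)| := by linarith
    have hk2 : K₀^2 ≤ (k:ℝ)^2 := by
      rw [← sq_abs ((k:ℝ))]
      nlinarith [abs_nonneg ((k:ℝ))]
    have hK₀sq : K₀^2 = 4*ℓ^2*M/Real.pi^2 := by
      rw [hK₀def, div_pow, mul_pow, mul_pow, Real.sq_sqrt hM0]
      ring
    have hμM : M ≤ μ k := by
      show M ≤ (k:ℝ)^2 * Real.pi^2 / (4*ℓ^2)
      rw [le_div_iff₀ (by positivity)]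
      have := hk2
      rw [hK₀sq] at this
      have h4 : 4*ℓ^2*M ≤ (k:ℝ)^2 * Real.pi^2 := by
        rw [div_le_iff₀ (by positivity)] at this
        nlinarith
      linarith
    have hAge : μ k ≤ A k := by
      simp only [hAdef]
      have := mul_le_mul_of_nonneg_left (neg_abs_le lam.re) hρ.le
      simp only [hMdef] at hμM
      nlinarith [hμ k]
    have hA0 : 0 ≤ A k := le_trans (hμ k) hAge
    have hsqμ : Real.sqrt (μ k) = |(k:ℝ)| * Real.pi / (2*ℓ) := by
      have : μ k = (|(k:ℝ)| * Real.pi / (2*ℓ))^2 := by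
        show (k:ℝ)^2 * Real.pi^2 / (4*ℓ^2) = _
        rw [div_pow, mul_pow, sq_abs]
        ring
      rw [this, Real.sqrt_sq (by positivity)]
    calc min (Real.pi/(4*ℓ)) (ρ/(K₀+2)) * (|(k:ℝ)| + 1)
        ≤ (Real.pi/(4*ℓ)) * (|(k:ℝ)| + 1) := by
          apply mul_le_mul_of_nonneg_right (min_le_left _ _) (by positivity)
      _ ≤ |(k:ℝ)| * Real.pi / (2*ℓ) := by
          rw [div_mul_eq_mul_div, div_le_div_iff₀ (by positivity) (by positivity)]
          nlinarith [mul_nonneg (mul_nonneg hℓ.le hπ.le) (sub_nonneg.mpr h1)]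
      _ = Real.sqrt (μ k) := hsqμ.symm
      _ ≤ Real.sqrt (A k) := Real.sqrt_le_sqrt hAge
      _ ≤ Real.sqrt ((Real.sqrt ((A k)^2 + B^2) + A k)/2) := aux2 _ _
      _ = (Z k).re := (hre k).symm
  · -- small k
    have h2 : 0 < K₀ + 2 := by linarith
    calc min (Real.pi/(4*ℓ)) (ρ/(K₀+2)) * (|(k:ℝ)| + 1)
        ≤ (ρ/(K₀+2)) * (K₀+2) := by
          apply mul_le_mul (min_le_right _ _) (by linarith) (by positivity) (by positivity)
      _ = ρ := by field_simp
      _ ≤ (Z k).re := (part1 k).le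
end

section
/- Let X be a complex Banach space, r > 0, p > 1, and M a bounded linear operator on X with spectral radius ρ > 1. For each n ∈ ℕ let T_n : B(0,r) → X satisfy ‖T_n(x) − Mx‖ ≤ b‖x‖^p for all x ∈ B(0,a) ⊆ B(0,r), with constants a, b > 0 independent of n. Suppose u ∈ X with ‖u‖ = 1 is an eigenvector of M with eigenvalue λ satisfying |λ|^p > ρ, and x' ∈ X* with ‖x'‖ ≤ 1 and x'(u) ≠ 0. Then there exists c > 0 such that for every δ > 0 there exist x₀ ∈ B(0,δ) and n₀ ∈ ℕ such that the iterates x_n = T_n(x_{n−1}), n = 1,…,n₀, are all well defined (remain in B(0,a)) and |x'(x_{n₀})| ≥ c·|x'(u)|. -/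
open Filter Finset ENNReal

private lemma aux_geom_sum_le16 {t : ℝ} (h0 : 0 ≤ t) (h1 : t < 1) (n : ℕ) :
    ∑ j ∈ Finset.range n, t ^ j ≤ 1 / (1 - t) := by
  have h1' : 0 < 1 - t := by linarith
  have htn : 0 ≤ t ^ n := pow_nonneg h0 n
  have heq : (t ^ n - 1) / (t - 1) = (1 - t ^ n) / (1 - t) := by
    rw [← neg_div_neg_eq]; ring_nf
  rw [geom_sum_eq h1.ne n, heq]
  gcongr
  linarith

private lemma aux_pow_bound16 {A : Type*} [NormedRing A] [NormedAlgebra ℂ A] [CompleteSpace A]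
    (M : A) {μ : ℝ} (hμ : 1 ≤ μ) (h : spectralRadius ℂ M < ENNReal.ofReal μ) :
    ∃ C : ℝ, 1 ≤ C ∧ ∀ n : ℕ, ‖M ^ n‖ ≤ C * μ ^ n := by
  have hμ0 : (0:ℝ) < μ := lt_of_lt_of_le one_pos hμ
  have hev : ∀ᶠ n : ℕ in atTop,
      ENNReal.ofReal (‖M ^ n‖ ^ (1 / (n:ℝ))) < ENNReal.ofReal μ :=
    (spectrum.pow_norm_pow_one_div_tendsto_nhds_spectralRadius M).eventually_lt_const h
  obtain ⟨N, hN⟩ := eventually_atTop.1 hev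
  have hbig : ∀ n, N + 1 ≤ n → ‖M ^ n‖ ≤ μ ^ n := by
    intro n hn
    have hn1 : n ≠ 0 := by omega
    have h2 : ‖M ^ n‖ ^ (1 / (n:ℝ)) < μ :=
      (ENNReal.ofReal_lt_ofReal_iff hμ0).mp (hN n (by omega))
    have hkey : ‖M ^ n‖ = (‖M ^ n‖ ^ (1 / (n:ℝ))) ^ n := by
      rw [← Real.rpow_natCast (‖M ^ n‖ ^ (1 / (n:ℝ))) n, ← Real.rpow_mul (norm_nonneg _),
        one_div_mul_cancel (Nat.cast_ne_zero.mpr hn1), Real.rpow_one]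
    rw [hkey]
    exact pow_le_pow_left₀ (Real.rpow_nonneg (norm_nonneg _) _) h2.le n
  have hC0 : 0 ≤ ∑ k ∈ Finset.range (N + 1), ‖M ^ k‖ :=
    Finset.sum_nonneg fun _ _ => norm_nonneg _
  refine ⟨(∑ k ∈ Finset.range (N + 1), ‖M ^ k‖) + 1, by linarith, ?_⟩
  intro n
  have hμn : (1:ℝ) ≤ μ ^ n := one_le_pow₀ hμ
  rcases le_or_gt n N with hnN | hnN
  · have h1 : ‖M ^ n‖ ≤ ∑ k ∈ Finset.range (N + 1), ‖M ^ k‖ :=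
      Finset.single_le_sum (fun k _ => norm_nonneg (M ^ k)) (Finset.mem_range.mpr (by omega))
    calc ‖M ^ n‖ ≤ (∑ k ∈ Finset.range (N + 1), ‖M ^ k‖) + 1 := by linarith
      _ ≤ ((∑ k ∈ Finset.range (N + 1), ‖M ^ k‖) + 1) * μ ^ n :=
        le_mul_of_one_le_right (by linarith) hμn
  · calc ‖M ^ n‖ ≤ μ ^ n := hbig n (by omega)
      _ ≤ ((∑ k ∈ Finset.range (N + 1), ‖M ^ k‖) + 1) * μ ^ n :=
        le_mul_of_one_le_left (by positivity) (by linarith)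

theorem stmt16 {X : Type*} [NormedAddCommGroup X] [NormedSpace ℂ X] [CompleteSpace X]
    (r a b p : ℝ) (hr : 0 < r) (ha : 0 < a) (har : a ≤ r) (hb : 0 < b) (hp : 1 < p)
    (M : X →L[ℂ] X) (hρ : 1 < spectralRadius ℂ M)
    (T : ℕ → X → X)
    (hT : ∀ n : ℕ, ∀ x : X, ‖x‖ < a → ‖T n x - M x‖ ≤ b * ‖x‖ ^ p)
    (u : X) (hu : ‖u‖ = 1) (lam : ℂ) (heig : M u = lam • u)
    (hlam : spectralRadius ℂ M < ENNReal.ofReal (‖lam‖ ^ p))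
    (x' : X →L[ℂ] ℂ) (hx' : ‖x'‖ ≤ 1) (hxu : x' u ≠ 0) :
    ∃ c > (0:ℝ), ∀ δ > (0:ℝ), ∃ (x₀ : X) (n₀ : ℕ) (xs : ℕ → X),
      ‖x₀‖ < δ ∧ xs 0 = x₀ ∧
      (∀ n : ℕ, 1 ≤ n → n ≤ n₀ → xs n = T n (xs (n - 1))) ∧
      (∀ n : ℕ, n < n₀ → ‖xs n‖ < a) ∧
      c * ‖x' u‖ ≤ ‖x' (xs n₀)‖ := by
  classical
  set L : ℝ := ‖lam‖ with hLdef
  have hL0 : (0:ℝ) ≤ L := norm_nonneg _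
  have hP1 : (1:ℝ≥0∞) < ENNReal.ofReal (L ^ p) := hρ.trans hlam
  have hPgt1 : (1:ℝ) < L ^ p := by
    by_contra hc
    push_neg at hc
    have h1 : ENNReal.ofReal (L ^ p) ≤ 1 := by
      simpa using ENNReal.ofReal_le_ofReal hc
    exact absurd (hP1.trans_le h1) (lt_irrefl _)
  have hL1 : 1 < L := by
    by_contra hc
    push_neg at hc
    have : L ^ p ≤ 1 := Real.rpow_le_one hL0 hc (by linarith)
    linarith
  have hLpos : (0:ℝ) < L := by linarith
  have hPpos : (0:ℝ) < L ^ p := by linarith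
  have hfin : spectralRadius ℂ M ≠ ⊤ := hlam.ne_top
  have hρrP : (spectralRadius ℂ M).toReal < L ^ p :=
    (ENNReal.lt_ofReal_iff_toReal_lt hfin).mp hlam
  have hρr1 : 1 < (spectralRadius ℂ M).toReal := by
    have := (ENNReal.toReal_lt_toReal (by simp) hfin).mpr hρ
    simpa using this
  set μ : ℝ := ((spectralRadius ℂ M).toReal + L ^ p) / 2 with hμdef
  have hμ1 : 1 < μ := by rw [hμdef]; linarith
  have hμP : μ < L ^ p := by rw [hμdef]; linarith
  have hμρ : spectralRadius ℂ M < ENNReal.ofReal μ := by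
    rw [ENNReal.lt_ofReal_iff_toReal_lt hfin]
    rw [hμdef]; linarith
  obtain ⟨C, hC1, hC⟩ := aux_pow_bound16 M hμ1.le hμρ
  have hC0 : (0:ℝ) < C := by linarith
  set t : ℝ := μ / (L ^ p) with htdef
  have ht0 : 0 < t := div_pos (by linarith) hPpos
  have ht1 : t < 1 := (div_lt_one hPpos).mpr hμP
  set θ : ℝ := ‖x' u‖ / 2 with hθdef
  have hxu0 : 0 < ‖x' u‖ := norm_pos_iff.mpr hxu
  have hθ0 : 0 < θ := by rw [hθdef]; linarith
  have hθ1 : θ ≤ 1 := by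
    have h1 : ‖x' u‖ ≤ ‖x'‖ * ‖u‖ := x'.le_opNorm u
    rw [hu, mul_one] at h1
    rw [hθdef]; linarith
  have h2p : (0:ℝ) < (2:ℝ) ^ p := Real.rpow_pos_of_pos two_pos p
  set E : ℝ := C * b * 2 ^ p * (1 / (1 - t)) / (L ^ p) with hEdef
  have hE0 : 0 < E := by
    apply div_pos _ hPpos
    apply mul_pos (mul_pos (mul_pos hC0 hb) h2p)
    exact div_pos one_pos (by linarith)
  set s₀ : ℝ := (θ / E) ^ (1 / (p - 1)) with hs₀def
  have hs₀0 : 0 < s₀ := Real.rpow_pos_of_pos (div_pos hθ0 hE0) _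
  have hs₀key : E * s₀ ^ (p - 1) = θ := by
    have hp1 : p - 1 ≠ 0 := by linarith
    rw [hs₀def, ← Real.rpow_mul (div_pos hθ0 hE0).le, one_div_mul_cancel hp1, Real.rpow_one]
    field_simp
  set σ : ℝ := min (s₀ / L) (a / 4) with hσdef
  have hσ0 : 0 < σ := lt_min (div_pos hs₀0 hLpos) (by linarith)
  have hσa : σ ≤ a / 4 := min_le_right _ _
  have hσs : σ * L ≤ s₀ := by
    have h1 : σ ≤ s₀ / L := min_le_left _ _
    calc σ * L ≤ (s₀ / L) * L := mul_le_mul_of_nonneg_right h1 hLpos.le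
      _ = s₀ := div_mul_cancel₀ _ (ne_of_gt hLpos)
  refine ⟨σ / 2, by linarith, ?_⟩
  intro δ hδ
  set ε : ℝ := min δ σ / 2 with hεdef
  have hε0 : 0 < ε := by rw [hεdef]; have := lt_min hδ hσ0; linarith
  have hεδ : ε < δ := by
    have h1 : min δ σ ≤ δ := min_le_left _ _
    rw [hεdef]; linarith
  have hεσ : ε < σ := by
    have h1 : min δ σ ≤ σ := min_le_right _ _
    rw [hεdef]; linarith
  set xs : ℕ → X := fun n => Nat.rec ((ε:ℂ) • u) (fun k xk => T (k+1) xk) n with hxsdef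
  have hxs0 : xs 0 = (ε:ℂ) • u := rfl
  have hxsS : ∀ n : ℕ, xs (n+1) = T (n+1) (xs n) := fun n => rfl
  have hexists : ∃ n : ℕ, σ < ε * L ^ n := by
    obtain ⟨n, hn⟩ := pow_unbounded_of_one_lt (σ / ε) hL1
    refine ⟨n, ?_⟩
    rw [div_lt_iff₀ hε0] at hn
    linarith [hn]
  set n₀ : ℕ := Nat.find hexists with hn₀def
  have hn₀spec : σ < ε * L ^ n₀ := Nat.find_spec hexists
  have hn₀min : ∀ m, m < n₀ → ε * L ^ m ≤ σ := fun m hm =>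
    le_of_not_gt (Nat.find_min hexists hm)
  have hn₀pos : 1 ≤ n₀ := by
    by_contra hc
    push_neg at hc
    have h0 : n₀ = 0 := by omega
    rw [h0, pow_zero, mul_one] at hn₀spec
    linarith
  have hbound : ∀ n, 1 ≤ n → n ≤ n₀ → ε * L ^ n ≤ s₀ := by
    intro n h1 h2
    have h3 : ε * L ^ (n-1) ≤ σ := hn₀min (n-1) (by omega)
    have h4 : ε * L ^ n = (ε * L ^ (n-1)) * L := by
      rw [mul_assoc, ← pow_succ]
      congr 2
      omega
    rw [h4]
    calc (ε * L ^ (n-1)) * L ≤ σ * L := mul_le_mul_of_nonneg_right h3 hLpos.le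
      _ ≤ s₀ := hσs
  have hLP : ∀ k : ℕ, ((L:ℝ) ^ k) ^ p = (L ^ p) ^ k := by
    intro k
    rw [← Real.rpow_natCast L k, ← Real.rpow_natCast (L ^ p) k,
      ← Real.rpow_mul hL0, ← Real.rpow_mul hL0, mul_comm]
  have hnorm_smul : ∀ n : ℕ, ‖((ε:ℂ) * lam ^ n) • u‖ = ε * L ^ n := by
    intro n
    rw [norm_smul, norm_mul, norm_pow, hu, mul_one, Complex.norm_real,
      Real.norm_eq_abs, abs_of_pos hε0]
  have hstep : ∀ n : ℕ, xs (n+1) - ((ε:ℂ) * lam ^ (n+1)) • u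
      = M (xs n - ((ε:ℂ) * lam ^ n) • u) + (xs (n+1) - M (xs n)) := by
    intro n
    rw [map_sub, map_smul, heig, smul_smul,
      show (ε:ℂ) * lam ^ n * lam = (ε:ℂ) * lam ^ (n+1) by ring]
    abel
  have hid : ∀ n : ℕ, xs n - ((ε:ℂ) * lam ^ n) • u
      = ∑ k ∈ Finset.range n, (M ^ (n - 1 - k)) (xs (k+1) - M (xs k)) := by
    intro n
    induction n with
    | zero => simp [hxs0]
    | succ n ih =>
      rw [hstep n, ih, map_sum, Finset.sum_range_succ]
      congr 1
      · apply Finset.sum_congr rfl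
        intro k hk
        have hk' : k < n := Finset.mem_range.mp hk
        rw [show n + 1 - 1 - k = (n - 1 - k) + 1 from by omega, pow_succ',
          ContinuousLinearMap.mul_apply]
      · simp
  have hsplit : ∀ k : ℕ, ‖xs k - ((ε:ℂ) * lam ^ k) • u‖ ≤ θ * (ε * L ^ k) →
      ‖xs k‖ ≤ ε * L ^ k + θ * (ε * L ^ k) := by
    intro k hk
    calc ‖xs k‖ = ‖((ε:ℂ) * lam ^ k) • u + (xs k - ((ε:ℂ) * lam ^ k) • u)‖ := by
          congr 1; abel
      _ ≤ ‖((ε:ℂ) * lam ^ k) • u‖ + ‖xs k - ((ε:ℂ) * lam ^ k) • u‖ := norm_add_le _ _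
      _ ≤ ε * L ^ k + θ * (ε * L ^ k) := by rw [hnorm_smul]; linarith
  have key : ∀ n, n ≤ n₀ → ‖xs n - ((ε:ℂ) * lam ^ n) • u‖ ≤ θ * (ε * L ^ n) := by
    intro n
    induction n using Nat.strong_induction_on with
    | _ n IH =>
      intro hn
      rcases Nat.eq_zero_or_pos n with h0 | h1
      · subst h0
        simp only [hxs0, pow_zero, mul_one, sub_self, norm_zero]
        positivity
      have hxk : ∀ k, k < n → ‖xs k‖ ≤ 2 * (ε * L ^ k) ∧ ‖xs k‖ < a := by
        intro k hk
        have hek := IH k hk (by omega)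
        have h2 := hsplit k hek
        have hεk : ε * L ^ k ≤ σ := hn₀min k (by omega)
        have hεkpos : 0 < ε * L ^ k := mul_pos hε0 (pow_pos hLpos k)
        have ht1' : θ * (ε * L ^ k) ≤ ε * L ^ k :=
          mul_le_of_le_one_left hεkpos.le hθ1
        exact ⟨by linarith, by linarith⟩
      have hD : ∀ k, k < n → ‖xs (k+1) - M (xs k)‖ ≤ b * 2 ^ p * ε ^ p * (L ^ p) ^ k := by
        intro k hk
        obtain ⟨hk2, hka⟩ := hxk k hk
        have hTk := hT (k+1) (xs k) hka
        rw [hxsS k]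
        have hεkpos : (0:ℝ) < ε * L ^ k := mul_pos hε0 (pow_pos hLpos k)
        calc ‖T (k+1) (xs k) - M (xs k)‖ ≤ b * ‖xs k‖ ^ p := hTk
          _ ≤ b * (2 * (ε * L ^ k)) ^ p := by
              apply mul_le_mul_of_nonneg_left _ hb.le
              exact Real.rpow_le_rpow (norm_nonneg _) hk2 (by linarith)
          _ = b * 2 ^ p * ε ^ p * (L ^ p) ^ k := by
              rw [Real.mul_rpow (by norm_num) hεkpos.le,
                Real.mul_rpow hε0.le (pow_nonneg hL0 k), hLP k]
              ring
      rw [hid n]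
      have hsum1 : ∀ k ∈ Finset.range n,
          ‖(M ^ (n - 1 - k)) (xs (k+1) - M (xs k))‖
            ≤ (C * b * 2 ^ p * ε ^ p * (L ^ p) ^ (n-1)) * t ^ (n - 1 - k) := by
        intro k hk
        have hk' : k < n := Finset.mem_range.mp hk
        calc ‖(M ^ (n - 1 - k)) (xs (k+1) - M (xs k))‖
            ≤ ‖(M ^ (n - 1 - k) : X →L[ℂ] X)‖ * ‖xs (k+1) - M (xs k)‖ :=
              ContinuousLinearMap.le_opNorm _ _
          _ ≤ (C * μ ^ (n - 1 - k)) * (b * 2 ^ p * ε ^ p * (L ^ p) ^ k) :=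
              mul_le_mul (hC _) (hD k hk') (norm_nonneg _) (by positivity)
          _ = (C * b * 2 ^ p * ε ^ p * (L ^ p) ^ (n-1)) * t ^ (n - 1 - k) := by
              have hμt : μ = t * L ^ p := by
                rw [htdef, div_mul_cancel₀ _ (ne_of_gt hPpos)]
              have hpadd : (L ^ p) ^ (n - 1 - k) * (L ^ p) ^ k = (L ^ p) ^ (n-1) := by
                rw [← pow_add]
                congr 1
                omega
              rw [hμt, mul_pow, ← hpadd]
              ring
      have hw : (0:ℝ) < ε * L ^ n := mul_pos hε0 (pow_pos hLpos n)
      have hwle : ε * L ^ n ≤ s₀ := hbound n h1 hn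
      have hABC : C * b * 2 ^ p * ε ^ p * (L ^ p) ^ (n-1) * (1 / (1 - t))
          = E * (ε * L ^ n) ^ p := by
        have h5 : (ε * L ^ n) ^ p = ε ^ p * (L ^ p) ^ n := by
          rw [Real.mul_rpow hε0.le (pow_nonneg hL0 n), hLP]
        have h6 : (L ^ p) ^ n = (L ^ p) ^ (n-1) * L ^ p := by
          rw [← pow_succ]
          congr 1
          omega
        have hgoal : C * b * 2 ^ p * (1 / (1 - t)) / (L ^ p) * (ε ^ p * ((L ^ p) ^ (n - 1) * L ^ p))
            = C * b * 2 ^ p * ε ^ p * (L ^ p) ^ (n - 1) * (1 / (1 - t)) * (L ^ p / L ^ p) := by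
          ring
        rw [h5, h6, hEdef, hgoal, div_self (ne_of_gt hPpos), mul_one]
      calc ‖∑ k ∈ Finset.range n, (M ^ (n - 1 - k)) (xs (k+1) - M (xs k))‖
          ≤ ∑ k ∈ Finset.range n, ‖(M ^ (n - 1 - k)) (xs (k+1) - M (xs k))‖ :=
            norm_sum_le _ _
        _ ≤ ∑ k ∈ Finset.range n,
              (C * b * 2 ^ p * ε ^ p * (L ^ p) ^ (n-1)) * t ^ (n - 1 - k) :=
            Finset.sum_le_sum hsum1
        _ = (C * b * 2 ^ p * ε ^ p * (L ^ p) ^ (n-1)) * ∑ k ∈ Finset.range n, t ^ (n - 1 - k) := by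
            rw [← Finset.mul_sum]
        _ ≤ (C * b * 2 ^ p * ε ^ p * (L ^ p) ^ (n-1)) * (1 / (1 - t)) := by
            have hcoef : (0:ℝ) ≤ C * b * 2 ^ p * ε ^ p * (L ^ p) ^ (n-1) :=
              mul_nonneg (mul_nonneg (mul_nonneg (mul_nonneg hC0.le hb.le) h2p.le)
                (Real.rpow_nonneg hε0.le p)) (pow_nonneg hPpos.le (n-1))
            apply mul_le_mul_of_nonneg_left _ hcoef
            rw [Finset.sum_range_reflect (fun j => t ^ j) n]
            exact aux_geom_sum_le16 ht0.le ht1 n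
        _ = E * (ε * L ^ n) ^ p := hABC
        _ ≤ θ * (ε * L ^ n) := by
            have h7 : (ε * L ^ n) ^ p = (ε * L ^ n) ^ (p - 1) * (ε * L ^ n) := by
              nth_rewrite 1 [show p = (p - 1) + 1 by ring]
              rw [Real.rpow_add_one hw.ne']
            rw [h7, ← mul_assoc]
            apply mul_le_mul_of_nonneg_right _ hw.le
            rw [← hs₀key]
            apply mul_le_mul_of_nonneg_left _ hE0.le
            exact Real.rpow_le_rpow hw.le hwle (by linarith)
  refine ⟨(ε:ℂ) • u, n₀, xs, ?_, hxs0, ?_, ?_, ?_⟩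
  · rw [norm_smul, Complex.norm_real, Real.norm_eq_abs, abs_of_pos hε0, hu, mul_one]
    exact hεδ
  · intro n hn1 hn2
    obtain ⟨m, rfl⟩ : ∃ m, n = m + 1 := ⟨n - 1, by omega⟩
    simpa using hxsS m
  · intro n hn
    have h1 := key n hn.le
    have h2 := hsplit n h1
    have h3 : ε * L ^ n ≤ σ := hn₀min n hn
    have h4 : 0 < ε * L ^ n := mul_pos hε0 (pow_pos hLpos n)
    have h5 : θ * (ε * L ^ n) ≤ ε * L ^ n := mul_le_of_le_one_left h4.le hθ1
    linarith
  · have h1 := key n₀ le_rfl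
    set w : ℝ := ε * L ^ n₀ with hwdef
    have hw0 : 0 < w := mul_pos hε0 (pow_pos hLpos n₀)
    set A : ℂ := ((ε:ℂ) * lam ^ n₀) * x' u with hAdef
    set B : ℂ := x' (xs n₀ - ((ε:ℂ) * lam ^ n₀) • u) with hBdef
    have h2 : x' (xs n₀) = A + B := by
      rw [hAdef, hBdef, map_sub, map_smul, smul_eq_mul]
      ring
    have h3 : ‖B‖ ≤ θ * w := by
      calc ‖B‖ ≤ ‖x'‖ * ‖xs n₀ - ((ε:ℂ) * lam ^ n₀) • u‖ :=
            ContinuousLinearMap.le_opNorm _ _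
        _ ≤ 1 * (θ * w) := mul_le_mul hx' h1 (norm_nonneg _) zero_le_one
        _ = θ * w := one_mul _
    have h4 : ‖A‖ = w * ‖x' u‖ := by
      rw [hAdef, norm_mul, norm_mul, norm_pow, Complex.norm_real,
        Real.norm_eq_abs, abs_of_pos hε0]
    have h5 : ‖A‖ ≤ ‖A + B‖ + ‖B‖ := by
      calc ‖A‖ = ‖(A + B) - B‖ := by congr 1; ring
        _ ≤ ‖A + B‖ + ‖B‖ := norm_sub_le _ _
    have h6 : σ ≤ w := hn₀spec.le
    have h7 : w * ‖x' u‖ - θ * w ≤ ‖x' (xs n₀)‖ := by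
      rw [h2]
      linarith [h3, h5, h4.symm.le]
    have h9 : σ * ‖x' u‖ ≤ w * ‖x' u‖ := mul_le_mul_of_nonneg_right h6 (norm_nonneg _)
    have h10 : θ * w = ‖x' u‖ / 2 * w := by rw [hθdef]
    linarith [h7, h9, h10]
end
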